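/- Let g_t and g₂ be independent random variables, each exponentially distributed with rate 1, and let B > 0, p₁ > 0, p₂ > 0, γ̂₂ > 0 be real numbers with p₂ > γ̂₂ · p₁. Set g = g_t · g₂ and γ̃_u2 = γ̂₂/(B·(p₂ − γ̂₂·p₁)). Then P( (B·p₂·g)/(B·p₁·g + 1) ≤ γ̂₂ ) = 1 − ∫₀^∞ exp(−(t + γ̃_u2/t)) dt. -/

import Mathlib

open MeasureTheory ProbabilityTheory Real Set


lemma expMeasure_one_apply {s : Set ℝ} (hs : MeasurableSet s) :
    expMeasure 1 s = ∫⁻ x in s, exponentialPDF 1 x := by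
  rw [expMeasure, gammaMeasure, withDensity_apply _ hs]
  rfl

lemma expMeasure_one_Iic {x : ℝ} (hx : 0 ≤ x) :
    expMeasure 1 (Iic x) = ENNReal.ofReal (1 - Real.exp (-x)) := by
  rw [expMeasure_one_apply measurableSet_Iic, lintegral_exponentialPDF_eq_antiDeriv one_pos,
    if_pos hx, one_mul]

lemma expMeasure_one_Iio_zero : expMeasure 1 (Iio 0) = 0 := by
  rw [expMeasure_one_apply measurableSet_Iio]
  exact lintegral_exponentialPDF_of_nonpos le_rfl

lemma prod_exp_mul_le (r : ℝ) (hr : 0 < r) :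
    (((expMeasure 1).prod (expMeasure 1)) {p : ℝ × ℝ | p.1 * p.2 ≤ r}).toReal
      = 1 - ∫ t in Ioi (0 : ℝ), Real.exp (-(t + r / t)) := by
  have hS : MeasurableSet {p : ℝ × ℝ | p.1 * p.2 ≤ r} :=
    measurableSet_le (measurable_fst.mul measurable_snd) measurable_const
  haveI := isProbabilityMeasure_expMeasure (r := 1) one_pos
  have hμ : expMeasure 1 = volume.withDensity (exponentialPDF 1) := rfl
  have hslice : ∀ x : ℝ, 0 < x →
      Prod.mk x ⁻¹' {p : ℝ × ℝ | p.1 * p.2 ≤ r} = Iic (r / x) := by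
    intro x hx
    ext y
    simp [Set.mem_Iic, le_div_iff₀ hx, mul_comm]
  have key : ((expMeasure 1).prod (expMeasure 1)) {p : ℝ × ℝ | p.1 * p.2 ≤ r}
      = ∫⁻ x in Ioi (0:ℝ),
          ENNReal.ofReal (Real.exp (-x) * (1 - Real.exp (-(r / x)))) := by
    rw [Measure.prod_apply hS]
    nth_rewrite 1 [hμ]
    have hpdfm : Measurable (exponentialPDF 1) := (measurable_exponentialPDFReal 1).ennreal_ofReal
    rw [lintegral_withDensity_eq_lintegral_mul _ hpdfm (measurable_measure_prodMk_left hS)]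
    have hne : ∀ᵐ (x : ℝ), x ≠ 0 := by
      refine ae_iff.mpr ?_
      simp [Real.volume_singleton]
    rw [← lintegral_indicator measurableSet_Ioi]
    apply lintegral_congr_ae
    filter_upwards [hne] with x hx
    rcases lt_trichotomy x 0 with h | h | h
    · simp only [Pi.mul_apply, Set.indicator_of_notMem (by simpa using h.not_gt : x ∉ Ioi (0:ℝ))]
      rw [exponentialPDF_of_neg h, zero_mul]
    · exact absurd h hx
    · rw [Set.indicator_of_mem (mem_Ioi.mpr h), Pi.mul_apply, hslice x h,
        expMeasure_one_Iic (div_nonneg hr.le h.le), exponentialPDF_of_nonneg h.le, one_mul,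
        one_mul, ← ENNReal.ofReal_mul (exp_pos _).le]
  rw [key]
  have hmeas : Measurable fun x : ℝ => Real.exp (-x) * (1 - Real.exp (-(r / x))) :=
    (measurable_id.neg.exp).mul
      (measurable_const.sub ((measurable_const.div measurable_id).neg.exp))
  have hnn : 0 ≤ᵐ[volume.restrict (Ioi (0:ℝ))]
      fun x : ℝ => Real.exp (-x) * (1 - Real.exp (-(r / x))) := by
    refine (ae_restrict_iff' measurableSet_Ioi).mpr (ae_of_all _ fun x hx => ?_)
    have : Real.exp (-(r / x)) ≤ 1 := by
      rw [Real.exp_le_one_iff]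
      simp [le_of_lt, div_pos hr (mem_Ioi.mp hx)]
    have h2 : (0:ℝ) ≤ 1 - Real.exp (-(r / x)) := by linarith
    positivity
  rw [← integral_eq_lintegral_of_nonneg_ae hnn hmeas.aestronglyMeasurable]
  have hint1 : IntegrableOn (fun x : ℝ => Real.exp (-x)) (Ioi (0:ℝ)) := by
    simpa using exp_neg_integrableOn_Ioi 0 one_pos
  have hint2 : IntegrableOn (fun x : ℝ => Real.exp (-(x + r / x))) (Ioi (0:ℝ)) := by
    refine hint1.mono' (Measurable.aestronglyMeasurable ?_) ?_
    · exact ((measurable_id.add (measurable_const.div measurable_id)).neg.exp)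
    · refine (ae_restrict_iff' measurableSet_Ioi).mpr (ae_of_all _ fun x hx => ?_)
      rw [Real.norm_eq_abs, abs_of_pos (exp_pos _), Real.exp_le_exp]
      have : 0 ≤ r / x := (div_pos hr (mem_Ioi.mp hx)).le
      linarith
  have hcong : ∫ x in Ioi (0:ℝ), Real.exp (-x) * (1 - Real.exp (-(r / x)))
      = ∫ x in Ioi (0:ℝ), (Real.exp (-x) - Real.exp (-(x + r / x))) := by
    refine setIntegral_congr_fun measurableSet_Ioi fun x _ => ?_
    rw [mul_sub, mul_one, ← Real.exp_add]
    ring_nf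
  rw [hcong, integral_sub hint1 hint2, integral_exp_neg_Ioi_zero]


/-- Theorem 2 specialized to a single port. With `g_t, g₂` independent
rate-1 exponentials, `g = g_t·g₂`, and `p₂ > γ̂₂·p₁`,
`P((B·p₂·g)/(B·p₁·g + 1) ≤ γ̂₂) = 1 − ∫₀^∞ exp(−(t + γ̃_u2/t)) dt`
where `γ̃_u2 = γ̂₂/(B·(p₂ − γ̂₂·p₁))`. -/
theorem weak_user_outage_single_port {Ω : Type*} [MeasureSpace Ω]
    [IsProbabilityMeasure (ℙ : Measure Ω)] (gt g₂ : Ω → ℝ)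
    (hind : IndepFun gt g₂ ℙ)
    (hgt : Measure.map gt ℙ = expMeasure 1) (hg₂ : Measure.map g₂ ℙ = expMeasure 1)
    (B p₁ p₂ γ₂ : ℝ)
    (hB : 0 < B) (hp₁ : 0 < p₁) (hp₂ : 0 < p₂) (hγ₂ : 0 < γ₂)
    (hp : p₂ > γ₂ * p₁) :
    (ℙ {ω | (B * p₂ * (gt ω * g₂ ω)) / (B * p₁ * (gt ω * g₂ ω) + 1) ≤ γ₂}).toReal
      = 1 - ∫ t in Ioi (0 : ℝ),
          Real.exp (-(t + γ₂ / (B * (p₂ - γ₂ * p₁)) / t)) := by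
  haveI := isProbabilityMeasure_expMeasure (r := 1) one_pos
  set r : ℝ := γ₂ / (B * (p₂ - γ₂ * p₁)) with hr_def
  have hpd : 0 < B * (p₂ - γ₂ * p₁) := mul_pos hB (by linarith)
  have hr : 0 < r := div_pos hγ₂ hpd
  have hmgt : AEMeasurable gt ℙ := by
    by_contra h
    rw [Measure.map_of_not_aemeasurable h] at hgt
    exact (IsProbabilityMeasure.ne_zero (expMeasure 1)) hgt.symm
  have hmg₂ : AEMeasurable g₂ ℙ := by
    by_contra h
    rw [Measure.map_of_not_aemeasurable h] at hg₂
    exact (IsProbabilityMeasure.ne_zero (expMeasure 1)) hg₂.symm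
  have hae : ∀ (f : Ω → ℝ), AEMeasurable f ℙ → Measure.map f ℙ = expMeasure 1 →
      ∀ᵐ ω ∂(ℙ : Measure Ω), 0 ≤ f ω := by
    intro f hmf hmap
    have h0 : ℙ (f ⁻¹' Iio 0) = 0 := by
      rw [← Measure.map_apply_of_aemeasurable hmf measurableSet_Iio, hmap,
        expMeasure_one_Iio_zero]
    refine ae_iff.mpr ?_
    simpa [not_le, preimage, Iio] using h0
  have hev : ℙ {ω | (B * p₂ * (gt ω * g₂ ω)) / (B * p₁ * (gt ω * g₂ ω) + 1) ≤ γ₂}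
      = ℙ {ω | gt ω * g₂ ω ≤ r} := by
    apply measure_congr
    filter_upwards [hae gt hmgt hgt, hae g₂ hmg₂ hg₂] with ω h1 h2
    simp only [eq_iff_iff]
    set g := gt ω * g₂ ω with hg
    show B * p₂ * g / (B * p₁ * g + 1) ≤ γ₂ ↔ g ≤ r
    have hgnn : 0 ≤ g := mul_nonneg h1 h2
    have hD : 0 < B * p₁ * g + 1 := by positivity
    rw [div_le_iff₀ hD, hr_def, le_div_iff₀ hpd]
    constructor <;> intro h <;> nlinarith
  have hmap : Measure.map (fun ω => (gt ω, g₂ ω)) ℙ = (expMeasure 1).prod (expMeasure 1) := by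
    exact ((indepFun_iff_map_prod_eq_prod_map_map hmgt hmg₂).mp hind).trans
      (by rw [hgt, hg₂])
  have hS : MeasurableSet {p : ℝ × ℝ | p.1 * p.2 ≤ r} :=
    measurableSet_le (measurable_fst.mul measurable_snd) measurable_const
  have h2 : ℙ {ω | gt ω * g₂ ω ≤ r}
      = ((expMeasure 1).prod (expMeasure 1)) {p : ℝ × ℝ | p.1 * p.2 ≤ r} := by
    rw [← hmap, Measure.map_apply_of_aemeasurable (hmgt.prodMk hmg₂) hS]
    rfl
  rw [hev, h2, prod_exp_mul_le r hr]
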